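/- Let N ≥ 1 and let 0 ≤ m_1 < m_2 < … < m_N < d be natural numbers, and let V ⊆ ℂ[x] be the ℂ-linear span of the N+1 polynomials P_{m_1;d}, …, P_{m_N;d}, (x+1)^d. Then the set of root multiplicities at −1 of the nonzero elements of V is exactly {0, 1, …, N−1} ∪ {d}. -/

import Mathlib

/-!
Let `L = (X + 1) D - d`. It annihilates `(X + 1)^d`, sends `P_{k;d}` to
`-(k + 1) (d choose k + 1) X^k`, and never lowers the order of vanishing at `-1`. So if `w ≠ 0`
lies in the span `W` of the `P_{m_i;d}`, then `w + c (X + 1)^d` vanishes at `-1` to order at most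
that of `L w`, a nonzero combination of `X^{m_1}, …, X^{m_N}`. A nonzero polynomial with `s`
monomials vanishes to order `< s` at a nonzero point: `X D - t` removes the monomial `X^t` and
lowers that order by at most one. Finally `W` is `N`-dimensional and all its nonzero elements have
order `< N`, so the first `N` Taylor coefficients at `-1` identify `W` with `ℂ^N`; the preimage
of the `k`-th unit vector has order exactly `k`.
-/

open Polynomial

/-- The truncated binomial `P_{k;d}(x) = ∑_{i=0}^{k} (d choose i) x^i` as a complex
polynomial. -/
noncomputable def truncBinom (d k : ℕ) : Polynomial ℂ :=
  ∑ i ∈ Finset.range (k + 1), Polynomial.C (Nat.choose d i : ℂ) * Polynomial.X ^ i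

open Finset

namespace Polynomial

section CommRing

variable {R : Type*} [CommRing R]

/-- `(X - a) D - d`; for `a = 0` it scales each monomial `X^e` by `e - d`. -/
noncomputable def eulerOp (a : R) (d : ℕ) : R[X] →ₗ[R] R[X] :=
  LinearMap.mulLeft R (X - C a) ∘ₗ derivative - LinearMap.mulLeft R (d : R[X])

theorem eulerOp_apply (a : R) (d : ℕ) (f : R[X]) :
    eulerOp a d f = (X - C a) * derivative f - (d : R[X]) * f := rfl

theorem eulerOp_X_sub_C_pow (a : R) (d : ℕ) : eulerOp a d ((X - C a) ^ d) = 0 := by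
  rcases d with _ | d
  · simp [eulerOp_apply]
  · rw [eulerOp_apply, derivative_X_sub_C_pow, Nat.add_sub_cancel, map_natCast]
    ring

theorem X_sub_C_pow_dvd_eulerOp {a : R} {k : ℕ} {f : R[X]} (b : R) (d : ℕ)
    (h : (X - C a) ^ (k + 1) ∣ f) : (X - C a) ^ k ∣ eulerOp b d f :=
  dvd_sub (dvd_mul_of_dvd_right (pow_sub_one_dvd_derivative_of_pow_dvd h) _)
    (dvd_mul_of_dvd_right ((pow_dvd_pow _ k.le_succ).trans h) _)

theorem X_sub_C_pow_dvd_eulerOp_self {a : R} {k : ℕ} {f : R[X]} (d : ℕ)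
    (h : (X - C a) ^ k ∣ f) : (X - C a) ^ k ∣ eulerOp a d f := by
  rcases k with _ | k
  · exact one_dvd _
  · refine dvd_sub ?_ (dvd_mul_of_dvd_right h _)
    have h' : (X - C a) ^ k ∣ derivative f := by
      simpa using pow_sub_one_dvd_derivative_of_pow_dvd h
    rw [pow_succ']
    exact mul_dvd_mul_left _ h'

theorem rootMultiplicity_le_rootMultiplicity_eulerOp_add_one {a : R} {f : R[X]} {b : R} {d : ℕ}
    (h : eulerOp b d f ≠ 0) : f.rootMultiplicity a ≤ (eulerOp b d f).rootMultiplicity a + 1 := by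
  obtain hk | hk := Nat.eq_zero_or_pos (f.rootMultiplicity a)
  · omega
  · have := (le_rootMultiplicity_iff h).2 <| X_sub_C_pow_dvd_eulerOp b d <|
      (Nat.sub_add_cancel hk).symm ▸ pow_rootMultiplicity_dvd f a
    omega

theorem rootMultiplicity_le_rootMultiplicity_eulerOp {a : R} {f : R[X]} {d : ℕ}
    (h : eulerOp a d f ≠ 0) : f.rootMultiplicity a ≤ (eulerOp a d f).rootMultiplicity a :=
  (le_rootMultiplicity_iff h).2 <| X_sub_C_pow_dvd_eulerOp_self d (pow_rootMultiplicity_dvd f a)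

theorem coeff_eulerOp_zero (t : ℕ) (p : R[X]) (e : ℕ) :
    (eulerOp 0 t p).coeff e = ((e : R) - t) * p.coeff e := by
  rw [eulerOp_apply, C_0, sub_zero, coeff_sub, coeff_natCast_mul]
  rcases e with _ | e
  · simp
  · rw [coeff_X_mul, coeff_derivative]
    push_cast
    ring

theorem support_subset_of_mem_span_X_pow {ι : Type*} {e : ι → ℕ} {p : R[X]}
    (hp : p ∈ Submodule.span R (Set.range fun i => (X : R[X]) ^ e i)) :
    ↑p.support ⊆ Set.range e := by
  induction hp using Submodule.span_induction with
  | mem _ h =>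
    obtain ⟨i, rfl⟩ := h
    dsimp only
    rw [← monomial_one_right_eq_X_pow]
    exact (coe_subset.2 (support_monomial_subset _ _)).trans (by simp)
  | zero => simp
  | add p q _ _ hp hq =>
    exact (coe_subset.2 (support_add)).trans (by simpa using And.intro hp hq)
  | smul c p _ hp => exact (coe_subset.2 (support_smul c p)).trans hp

theorem rootMultiplicity_smul_X_sub_C_pow [IsDomain R] {c : R} (hc : c ≠ 0) (a : R) (n : ℕ) :
    (c • (X - C a) ^ n).rootMultiplicity a = n := by
  rw [smul_eq_C_mul, rootMultiplicity_mul_X_sub_C_pow (C_ne_zero.2 hc), rootMultiplicity_C,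
    zero_add]

variable [IsDomain R] [CharZero R]

theorem support_eulerOp_zero (t : ℕ) (p : R[X]) :
    (eulerOp 0 t p).support = p.support.erase t := by
  ext e
  simp [coeff_eulerOp_zero, sub_eq_zero]

theorem rootMultiplicity_lt_card_support {a : R} (ha : a ≠ 0) {p : R[X]} (hp : p ≠ 0) :
    p.rootMultiplicity a < #p.support := by
  obtain ⟨n, hn⟩ : ∃ n, #p.support = n + 1 :=
    Nat.exists_eq_succ_of_ne_zero (card_ne_zero.2 (nonempty_support_iff.2 hp))
  induction n generalizing p with
  | zero =>
    obtain ⟨k, x, hx, rfl⟩ := card_support_eq_one.1 hn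
    rw [rootMultiplicity_eq_zero (by simp [hx, ha]), hn]
    exact Nat.one_pos
  | succ n ih =>
    set q := eulerOp 0 p.natDegree p
    have hq : #q.support = n + 1 := by
      rw [support_eulerOp_zero, card_erase_of_mem (natDegree_mem_support_of_nonzero hp), hn,
        Nat.add_sub_cancel]
    have hq0 : q ≠ 0 := by
      rintro h
      simp [h] at hq
    have hlt : q.rootMultiplicity a < n + 1 := hq ▸ ih hq0 hq
    have hle : p.rootMultiplicity a ≤ q.rootMultiplicity a + 1 :=
      rootMultiplicity_le_rootMultiplicity_eulerOp_add_one hq0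
    omega

end CommRing

theorem exists_rootMultiplicity_eq_of_finrank_eq {K : Type*} [Field K] (a : K)
    {W : Submodule K K[X]} {n : ℕ} (hW : Module.finrank K W = n)
    (hlt : ∀ f ∈ W, f ≠ 0 → f.rootMultiplicity a < n) {k : ℕ} (hk : k < n) :
    ∃ f ∈ W, f ≠ 0 ∧ f.rootMultiplicity a = k := by
  have : FiniteDimensional K W := Module.finite_of_finrank_pos (by omega)
  let T : W →ₗ[K] Fin n → K :=
    LinearMap.pi (fun j => (lcoeff K j).comp (taylor a)) ∘ₗ W.subtype
  have hT (f : W) (j : Fin n) : T f j = (taylor a (f : K[X])).coeff j := rfl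
  have hord (f : K[X]) : f.rootMultiplicity a = (taylor a f).natTrailingDegree := by
    rw [rootMultiplicity_eq_natTrailingDegree, taylor_apply]
  have hinj : Function.Injective T := by
    rw [← LinearMap.ker_eq_bot, LinearMap.ker_eq_bot']
    intro f hf
    by_contra hf0
    have hf0 : (f : K[X]) ≠ 0 := by simpa using hf0
    refine (hlt f f.2 hf0).not_ge (hord f ▸ le_natTrailingDegree (by simpa using hf0) ?_)
    intro j hj
    simpa [hT] using congrFun hf ⟨j, hj⟩
  obtain ⟨f, hf⟩ := ((LinearMap.injective_iff_surjective_of_finrank_eq_finrank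
    (by simp [hW])).1 hinj) (Pi.single ⟨k, hk⟩ 1)
  have hfk : (taylor a (f : K[X])).coeff k = 1 := by simpa [hT] using congrFun hf ⟨k, hk⟩
  have hf0 : (f : K[X]) ≠ 0 := by
    rintro h
    simp [h] at hfk
  refine ⟨f, f.2, hf0, hord f ▸ le_antisymm (natTrailingDegree_le_of_ne_zero (by simp [hfk]))
    (le_natTrailingDegree (by simpa using hf0) fun j hj => ?_)⟩
  simpa [hT, Fin.ext_iff, hj.ne] using congrFun hf ⟨j, hj.trans hk⟩

end Polynomial

theorem Nat.succ_mul_choose_succ_add_mul_choose (d k : ℕ) :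
    (k + 1) * d.choose (k + 1) + k * d.choose k = d * d.choose k := by
  rcases le_or_gt k d with h | h
  · rw [mul_comm (k + 1), Nat.choose_succ_right_eq, mul_comm k, ← mul_add,
      Nat.sub_add_cancel h, mul_comm]
  · simp [Nat.choose_eq_zero_of_lt h, Nat.choose_eq_zero_of_lt (h.trans k.lt_succ_self)]

theorem truncBinom_succ (d k : ℕ) :
    truncBinom d (k + 1) = truncBinom d k + C (d.choose (k + 1) : ℂ) * X ^ (k + 1) :=
  Finset.sum_range_succ _ _

theorem eulerOp_truncBinom (d k : ℕ) :
    eulerOp (-1) d (truncBinom d k) = -(((k + 1) * d.choose (k + 1) : ℕ) : ℂ) • X ^ k := by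
  induction k with
  | zero => simp [truncBinom, eulerOp_apply, smul_eq_C_mul]
  | succ k ih =>
    have key : ((k + 2) * d.choose (k + 2) + (k + 1) * d.choose (k + 1) : ℂ[X])
        = d * d.choose (k + 1) := by
      exact_mod_cast Nat.succ_mul_choose_succ_add_mul_choose d (k + 1)
    rw [truncBinom_succ, map_add, ih, eulerOp_apply, derivative_C_mul_X_pow]
    simp only [map_neg, map_one, sub_neg_eq_add, smul_eq_C_mul]
    push_cast
    simp only [C_mul, C_add, C_1, map_natCast]
    linear_combination X ^ (k + 1) * key

section TruncBinomFamily

variable {N d : ℕ} {m : Fin N → ℕ}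

theorem linearIndependent_eulerOp_truncBinom (hm : Function.Injective m) (hlt : ∀ i, m i < d) :
    LinearIndependent ℂ (eulerOp (-1) d ∘ fun i => truncBinom d (m i)) := by
  have hX : LinearIndependent ℂ fun i => (X : ℂ[X]) ^ m i := by
    simpa [monomial_one_right_eq_X_pow, Function.comp_def] using
      (basisMonomials ℂ).linearIndependent.comp m hm
  let w (i : Fin N) : ℂˣ := Units.mk0 (-(((m i + 1) * d.choose (m i + 1) : ℕ) : ℂ)) <| by
    simpa [Nat.cast_add_one_ne_zero] using (Nat.choose_pos (hlt i)).ne'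
  convert hX.units_smul w using 1
  ext i : 1
  simp [eulerOp_truncBinom, w, Units.smul_def]

theorem eulerOp_mem_span_X_pow {w : ℂ[X]}
    (hw : w ∈ Submodule.span ℂ (Set.range fun i => truncBinom d (m i))) :
    eulerOp (-1) d w ∈ Submodule.span ℂ (Set.range fun i => (X : ℂ[X]) ^ m i) := by
  rw [← Submodule.mem_comap]
  refine Submodule.span_le.2 ?_ hw
  rintro _ ⟨i, rfl⟩
  rw [SetLike.mem_coe, Submodule.mem_comap, eulerOp_truncBinom]
  exact Submodule.smul_mem _ _ (Submodule.subset_span ⟨i, rfl⟩)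

theorem rootMultiplicity_add_smul_X_add_one_pow_lt (hm : Function.Injective m)
    (hlt : ∀ i, m i < d) {w : ℂ[X]}
    (hw : w ∈ Submodule.span ℂ (Set.range fun i => truncBinom d (m i))) (hw0 : w ≠ 0) (c : ℂ) :
    (w + c • (X + 1) ^ d).rootMultiplicity (-1) < N := by
  have hL : eulerOp (-1) d (w + c • (X + 1) ^ d) = eulerOp (-1) d w := by
    have h := eulerOp_X_sub_C_pow (-1 : ℂ) d
    rw [map_neg, map_one, sub_neg_eq_add] at h
    rw [map_add, map_smul, h, smul_zero, add_zero]
  have hLw : eulerOp (-1) d w ≠ 0 := fun h => hw0 <| Submodule.disjoint_def.1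
    (Submodule.range_ker_disjoint (linearIndependent_eulerOp_truncBinom hm hlt)) w hw h
  calc (w + c • (X + 1) ^ d).rootMultiplicity (-1)
      ≤ (eulerOp (-1) d w).rootMultiplicity (-1) :=
        hL ▸ rootMultiplicity_le_rootMultiplicity_eulerOp (by rwa [hL])
    _ < #(eulerOp (-1) d w).support := rootMultiplicity_lt_card_support (by norm_num) hLw
    _ ≤ #(univ.image m) := card_le_card <| by
        simpa [← coe_subset] using support_subset_of_mem_span_X_pow (eulerOp_mem_span_X_pow hw)
    _ ≤ N := card_image_le.trans (by simp)

end TruncBinomFamily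

theorem span_truncBinoms_orders_at_neg_one_general (N d : ℕ)
    (m : Fin N → ℕ) (hmono : StrictMono m) (hlt : ∀ i, m i < d)
    (V : Submodule ℂ (Polynomial ℂ))
    (hV : V = Submodule.span ℂ (Set.range
      (Fin.snoc (fun i : Fin N => truncBinom d (m i))
        ((Polynomial.X + 1) ^ d : Polynomial ℂ)))) :
    {k : ℕ | ∃ f ∈ V, f ≠ 0 ∧ Polynomial.rootMultiplicity (-1) f = k}
      = {k : ℕ | k < N} ∪ {d} := by
  have hX : (X + 1 : ℂ[X]) = X - C (-1) := by simp
  have hW : Module.finrank ℂ (Submodule.span ℂ (Set.range fun i => truncBinom d (m i))) = N := by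
    rw [finrank_span_eq_card
      ((linearIndependent_eulerOp_truncBinom hmono.injective hlt).of_comp _), Fintype.card_fin]
  rw [hV, Fin.range_snoc, Submodule.span_insert]
  ext k
  constructor
  · rintro ⟨f, hf, hf0, rfl⟩
    obtain ⟨_, hc, w, hw, rfl⟩ := Submodule.mem_sup.1 hf
    obtain ⟨c, rfl⟩ := Submodule.mem_span_singleton.1 hc
    rcases eq_or_ne w 0 with rfl | hw0
    · have hc0 : c ≠ 0 := by
        rintro rfl
        simp at hf0
      right
      rw [add_zero, hX, rootMultiplicity_smul_X_sub_C_pow hc0, Set.mem_singleton_iff]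
    · left
      rw [add_comm]
      exact rootMultiplicity_add_smul_X_add_one_pow_lt hmono.injective hlt hw hw0 c
  · rintro (hk | rfl)
    · obtain ⟨f, hf, hf0, rfl⟩ := exists_rootMultiplicity_eq_of_finrank_eq (-1) hW
        (fun f hf hf0 => by
          simpa using rootMultiplicity_add_smul_X_add_one_pow_lt hmono.injective hlt hf hf0 0) hk
      exact ⟨f, Submodule.mem_sup_right hf, hf0, rfl⟩
    · rw [hX]
      exact ⟨_, Submodule.mem_sup_left (Submodule.mem_span_singleton_self _),
        pow_ne_zero _ (X_sub_C_ne_zero _), rootMultiplicity_X_sub_C_pow _ _⟩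

/-- Let `V` be the span of `P_{m_1;d}, …, P_{m_N;d}, (x+1)^d` where
`0 ≤ m_1 < … < m_N < d`.  Then the set of root multiplicities at `−1` of the
nonzero elements of `V` is exactly `{0, 1, …, N−1} ∪ {d}`. -/
theorem span_truncBinoms_orders_at_neg_one (N d : ℕ) (hN : 1 ≤ N)
    (m : Fin N → ℕ) (hmono : StrictMono m) (hlt : ∀ i, m i < d)
    (V : Submodule ℂ (Polynomial ℂ))
    (hV : V = Submodule.span ℂ (Set.range
      (Fin.snoc (fun i : Fin N => truncBinom d (m i))
        ((Polynomial.X + 1) ^ d : Polynomial ℂ)))) :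
    {k : ℕ | ∃ f ∈ V, f ≠ 0 ∧ Polynomial.rootMultiplicity (-1) f = k}
      = {k : ℕ | k < N} ∪ {d} :=
  span_truncBinoms_orders_at_neg_one_general N d m hmono hlt V hV
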